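/- Let H₀, H₁ be graphs with V(H₀) ∩ V(H₁) = U, |U| ≥ 3, and E(H₀) ∩ E(H₁) = ∅. Let H₂ be a wheel with U as its set of rim vertices, V(H₀) ∩ V(H₂) = U and E(H₀) ∩ E(H₂) = ∅. Put G₁ = H₀ ∪ H₁ and G₂ = H₀ ∪ H₂. Suppose G₁ is 3-connected and each vertex of U has degree at least four in G₂. Then G₂ − e is 3-connected for some edge e on the rim of H₂. -/

import Mathlib

open scoped Classical

noncomputable section

/-- The subfield generated by a subfield `K` and an element `x`. -/
def Subfield.adjoinEl {F : Type*} [Field F] (K : Subfield F) (x : F) : Subfield F :=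
  Subfield.closure (↑K ∪ {x})

/-- `M` is a radical extension of `K`: there is a tower
`K = K₁ ⊆ K₂ ⊆ … ⊆ K_t = M` with `K_{i+1} = K_i(x_i)` and `x_i ^ n_i ∈ K_i`. -/
def IsRadicalExtension {F : Type*} [Field F] (K M : Subfield F) : Prop :=
  ∃ t : ℕ, ∃ c : Fin (t + 1) → Subfield F,
    c 0 = K ∧ c (Fin.last t) = M ∧
    ∀ i : Fin t, ∃ x : F, ∃ n : ℕ, 0 < n ∧ x ^ n ∈ c i.castSucc ∧
      c i.succ = (c i.castSucc).adjoinEl x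

/-- `M` is a quadratic extension of `K`: a radical extension with all `n_i = 2`. -/
def IsQuadraticExtension {F : Type*} [Field F] (K M : Subfield F) : Prop :=
  ∃ t : ℕ, ∃ c : Fin (t + 1) → Subfield F,
    c 0 = K ∧ c (Fin.last t) = M ∧
    ∀ i : Fin t, ∃ x : F, x ^ 2 ∈ c i.castSucc ∧
      c i.succ = (c i.castSucc).adjoinEl x

/-- `L : K` is radically solvable if `L` is contained in a radical extension of `K`. -/
def RadicallySolvable {F : Type*} [Field F] (K L : Subfield F) : Prop :=
  ∃ M : Subfield F, L ≤ M ∧ IsRadicalExtension K M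

/-- `L : K` is quadratically solvable if `L` is contained in a quadratic extension of `K`. -/
def QuadraticallySolvable {F : Type*} [Field F] (K L : Subfield F) : Prop :=
  ∃ M : Subfield F, L ≤ M ∧ IsQuadraticExtension K M

/-- A finite graph: a finite set of vertices (natural numbers) and of edges. -/
structure FinGraph : Type where
  verts : Finset ℕ
  edges : Finset (Sym2 ℕ)

namespace FinGraph

/-- A graph is well-formed if it has no loops and edges join vertices. -/
def WellFormed (G : FinGraph) : Prop :=
  (∀ e ∈ G.edges, ¬ e.IsDiag) ∧ (∀ e ∈ G.edges, ∀ v ∈ e, v ∈ G.verts)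

def union (G H : FinGraph) : FinGraph := ⟨G.verts ∪ H.verts, G.edges ∪ H.edges⟩

def addEdge (G : FinGraph) (u v : ℕ) : FinGraph := ⟨G.verts, insert s(u, v) G.edges⟩

def deleteEdge (G : FinGraph) (e : Sym2 ℕ) : FinGraph := ⟨G.verts, G.edges.erase e⟩

end FinGraph

/-- `d_p(u,v) = a² + b²` where `(a,b) = p u - p v`. -/
def sqDist {R : Type*} [CommRing R] (p : ℕ → R × R) (u v : ℕ) : R :=
  ((p u).1 - (p v).1) ^ 2 + ((p u).2 - (p v).2) ^ 2

/-- Two frameworks are equivalent if corresponding edges have equal squared lengths. -/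
def FEquiv {R : Type*} [CommRing R] (G : FinGraph) (p q : ℕ → R × R) : Prop :=
  ∀ u v : ℕ, s(u, v) ∈ G.edges → sqDist p u v = sqDist q u v

/-- Two frameworks are congruent if all pairs of vertices have equal squared distances. -/
def FCong {R : Type*} [CommRing R] (G : FinGraph) (p q : ℕ → R × R) : Prop :=
  ∀ u ∈ G.verts, ∀ v ∈ G.verts, sqDist p u v = sqDist q u v

/-- A framework is generic if the coordinates of its points are
algebraically independent over `ℚ`. -/
def FGeneric {R : Type*} [CommRing R] [Algebra ℚ R] (G : FinGraph) (p : ℕ → R × R) : Prop :=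
  AlgebraicIndependent ℚ
    (fun vb : {x // x ∈ G.verts} × Bool => if vb.2 then (p vb.1.1).2 else (p vb.1.1).1)

/-- A complex framework is quasi-generic if it is congruent to a generic one. -/
def QuasiGeneric (G : FinGraph) (p : ℕ → ℂ × ℂ) : Prop :=
  ∃ p' : ℕ → ℂ × ℂ, FGeneric G p' ∧ FCong G p p'

/-- A real framework is rigid if all equivalent frameworks near it are congruent to it. -/
def RigidFramework (G : FinGraph) (p : ℕ → ℝ × ℝ) : Prop :=
  ∃ ε : ℝ, 0 < ε ∧ ∀ q : ℕ → ℝ × ℝ, FEquiv G p q →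
    (∀ v ∈ G.verts, ((p v).1 - (q v).1) ^ 2 + ((p v).2 - (q v).2) ^ 2 < ε) →
    FCong G p q

/-- A graph is rigid if every generic real realisation is rigid. -/
def FinGraph.Rigid (G : FinGraph) : Prop :=
  ∀ p : ℕ → ℝ × ℝ, FGeneric G p → RigidFramework G p

/-- A graph is minimally rigid if it is rigid but ceases to be so on deleting any edge. -/
def FinGraph.MinimallyRigid (G : FinGraph) : Prop :=
  G.Rigid ∧ ∀ e ∈ G.edges, ¬ (G.deleteEdge e).Rigid

/-- A graph is globally rigid if for every generic complex realisation every
equivalent realisation is congruent to it. -/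
def FinGraph.GloballyRigid (G : FinGraph) : Prop :=
  ∀ p : ℕ → ℂ × ℂ, FGeneric G p → ∀ q : ℕ → ℂ × ℂ, FEquiv G p q → FCong G p q

/-- `ℚ(p)`: the subfield of `ℂ` generated by the coordinates of the points of `p`. -/
def coordField (G : FinGraph) (p : ℕ → ℂ × ℂ) : Subfield ℂ :=
  Subfield.closure {z : ℂ | ∃ v ∈ G.verts, z = (p v).1 ∨ z = (p v).2}

/-- `ℚ(d_G(p))`: the subfield of `ℂ` generated by the squared edge lengths of `(G,p)`. -/
def distField (G : FinGraph) (p : ℕ → ℂ × ℂ) : Subfield ℂ :=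
  Subfield.closure {z : ℂ | ∃ u v : ℕ, s(u, v) ∈ G.edges ∧ z = sqDist p u v}

/-- A complex framework is radically solvable if some congruent framework `(G,q)`
has `ℚ(q) : ℚ(d_G(q))` radically solvable. -/
def RadSolvableFramework (G : FinGraph) (p : ℕ → ℂ × ℂ) : Prop :=
  ∃ q : ℕ → ℂ × ℂ, FCong G p q ∧ RadicallySolvable (distField G q) (coordField G q)

def QuadSolvableFramework (G : FinGraph) (p : ℕ → ℂ × ℂ) : Prop :=
  ∃ q : ℕ → ℂ × ℂ, FCong G p q ∧ QuadraticallySolvable (distField G q) (coordField G q)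

/-- A graph is radically solvable if every generic realisation is radically solvable. -/
def FinGraph.RadSolvable (G : FinGraph) : Prop :=
  ∀ p : ℕ → ℂ × ℂ, FGeneric G p → RadSolvableFramework G p

/-- A graph is quadratically solvable if every generic realisation is so. -/
def FinGraph.QuadSolvable (G : FinGraph) : Prop :=
  ∀ p : ℕ → ℂ × ℂ, FGeneric G p → QuadSolvableFramework G p

/-- Standard position with respect to `(v₁, v₂)`: `p v₁ = (0,0)` and `p v₂ = (0,z)`. -/
def StdPos (p : ℕ → ℂ × ℂ) (v₁ v₂ : ℕ) : Prop :=
  p v₁ = (0, 0) ∧ (p v₂).1 = 0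

/-- The cyclically next index on the rim. -/
def rimNext {m : ℕ} (i : Fin m) : Fin m :=
  ⟨(i.val + 1) % m, Nat.mod_lt _ (Nat.lt_of_le_of_lt (Nat.zero_le i.val) i.isLt)⟩

/-- `W` is a wheel with hub `hub` and rim `u 0, u 1, …, u (m-1)` (so `W` has `m + 1 ≥ 4`
vertices). -/
def IsWheel (W : FinGraph) (hub : ℕ) (m : ℕ) (u : Fin m → ℕ) : Prop :=
  3 ≤ m ∧ Function.Injective u ∧ (∀ i, u i ≠ hub) ∧
  W.verts = insert hub (Finset.image u Finset.univ) ∧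
  W.edges = Finset.image (fun i => s(hub, u i)) Finset.univ ∪
    Finset.image (fun i => s(u i, u (rimNext i))) Finset.univ

/-- The degree of a vertex. -/
def FinGraph.degree (G : FinGraph) (v : ℕ) : ℕ := (G.edges.filter (fun e => v ∈ e)).card

/-- Deletion of a set of vertices (and all edges meeting it). -/
def FinGraph.deleteVerts (G : FinGraph) (S : Finset ℕ) : FinGraph :=
  ⟨G.verts \ S, G.edges.filter (fun e => ∀ v ∈ e, v ∉ S)⟩

/-- A graph is connected if it has a vertex and all vertices are joined by walks. -/
def FinGraph.Connected (G : FinGraph) : Prop :=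
  G.verts.Nonempty ∧
    ∀ u ∈ G.verts, ∀ v ∈ G.verts,
      Relation.ReflTransGen (fun a b => s(a, b) ∈ G.edges) u v

/-- `G` is `k`-connected if `|V| ≥ k + 1` and deleting fewer than `k` vertices leaves
a connected graph. -/
def FinGraph.KConnected (k : ℕ) (G : FinGraph) : Prop :=
  k + 1 ≤ G.verts.card ∧
    ∀ S : Finset ℕ, S ⊆ G.verts → S.card < k → (G.deleteVerts S).Connected

/-!
Since `H₀ ∪ H₁` is 3-connected, every vertex of `H₀` can still reach `U` inside `H₀` after any
two vertices are deleted. Hence if deleting the rim edge `uᵢuᵢ₊₁` from `G₂` destroys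
3-connectivity, the only possible separators are pairs `{hub, uₖ}` with `uₖ` separating `uᵢ` from
`uᵢ₊₁`; write `k = i + 1 + pᵢ`. Take `i` with `pᵢ` minimal and put `x = uᵢ₊₁`. By minimality, the
vertices lying on the side of `x` for both the separator of `uᵢuᵢ₊₁` and that of `uᵢ₊₁uᵢ₊₂`
contain no rim vertex other than `x`, so apart from `x` they are closed under the edges of
`G₂ - uᵢuᵢ₊₁ - x`. The fourth edge at `x` leads into this set and `G₂ - uᵢuᵢ₊₁ - x` is connected,
so the set contains the hub, which lies in both separators.
-/

open Fin.NatCast Fin.CommRing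

namespace FinGraph

variable {G G' : FinGraph} {S : Finset ℕ} {a b c x : ℕ}

def Reach (G : FinGraph) (a b : ℕ) : Prop :=
  Relation.ReflTransGen (fun x y => s(x, y) ∈ G.edges) a b

@[simp] lemma union_verts : (G.union G').verts = G.verts ∪ G'.verts := rfl

@[simp] lemma deleteEdge_verts {e : Sym2 ℕ} : (G.deleteEdge e).verts = G.verts := rfl

@[simp] lemma deleteVerts_verts : (G.deleteVerts S).verts = G.verts \ S := rfl

@[simp] lemma mem_union_edges {e : Sym2 ℕ} :
    e ∈ (G.union G').edges ↔ e ∈ G.edges ∨ e ∈ G'.edges :=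
  Finset.mem_union

@[simp] lemma mem_deleteEdge_edges {e f : Sym2 ℕ} :
    f ∈ (G.deleteEdge e).edges ↔ f ≠ e ∧ f ∈ G.edges :=
  Finset.mem_erase

lemma edges_subset_union_right : G'.edges ⊆ (G.union G').edges := Finset.subset_union_right

lemma mk_mem_deleteVerts_edges :
    s(a, b) ∈ (G.deleteVerts S).edges ↔ s(a, b) ∈ G.edges ∧ a ∉ S ∧ b ∉ S := by
  simp [deleteVerts]

lemma WellFormed.union (hG : G.WellFormed) (hG' : G'.WellFormed) : (G.union G').WellFormed := by
  refine ⟨fun e he => ?_, fun e he v hv => ?_⟩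
  · rcases mem_union_edges.1 he with he | he
    exacts [hG.1 e he, hG'.1 e he]
  · rcases mem_union_edges.1 he with he | he
    exacts [Finset.mem_union_left _ (hG.2 e he v hv), Finset.mem_union_right _ (hG'.2 e he v hv)]

namespace Reach

protected lemma refl : G.Reach a a := Relation.ReflTransGen.refl

lemma single (h : s(a, b) ∈ G.edges) : G.Reach a b := Relation.ReflTransGen.single h

lemma tail (h : G.Reach a b) (hbc : s(b, c) ∈ G.edges) : G.Reach a c :=
  Relation.ReflTransGen.tail h hbc

protected lemma trans (h : G.Reach a b) (h' : G.Reach b c) : G.Reach a c :=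
  Relation.ReflTransGen.trans h h'

protected lemma symm (h : G.Reach a b) : G.Reach b a := by
  induction h with
  | refl => exact Reach.refl
  | tail _ hbc ih => exact (single (Sym2.eq_swap ▸ hbc)).trans ih

lemma mono (hGG' : G.edges ⊆ G'.edges) (h : G.Reach a b) : G'.Reach a b :=
  Relation.ReflTransGen.mono (fun _ _ hxy => hGG' hxy) _ _ h

lemma of_forall_edge {P : ℕ → Prop} (hP : ∀ a b, s(a, b) ∈ G.edges → P a → P b)
    (h : G.Reach a b) (ha : P a) : P b := by
  induction h with
  | refl => exact ha
  | tail _ hbc ih => exact hP _ _ hbc ih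

lemma notMem_of_deleteVerts (h : (G.deleteVerts S).Reach a b) (ha : a ∉ S) : b ∉ S :=
  of_forall_edge (P := (· ∉ S)) (fun _ _ he _ => (mk_mem_deleteVerts_edges.1 he).2.2) h ha

end Reach

lemma Connected.of_reach {τ : ℕ} (hτ : τ ∈ G.verts) (h : ∀ a ∈ G.verts, G.Reach a τ) :
    G.Connected :=
  ⟨⟨τ, hτ⟩, fun a ha b hb => (h a ha).trans (h b hb).symm⟩

lemma exists_mk_mem_edges_notMem_of_card_lt_degree {E : Finset (Sym2 ℕ)}
    (h : E.card < G.degree x) : ∃ y, s(x, y) ∈ G.edges ∧ s(x, y) ∉ E := by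
  obtain ⟨e, he, heE⟩ := Finset.exists_mem_notMem_of_card_lt_card h
  obtain ⟨he, hxe⟩ := Finset.mem_filter.1 he
  obtain ⟨y, rfl⟩ := Sym2.mem_iff_exists.1 hxe
  exact ⟨y, he, heE⟩

def KConnectedTo (k : ℕ) (G : FinGraph) (U : Finset ℕ) : Prop :=
  ∀ S : Finset ℕ, S.card < k → ∀ x ∈ G.verts, x ∉ S →
    ∃ w ∈ U, w ∉ S ∧ (G.deleteVerts S).Reach x w

theorem KConnected.kConnectedTo_inter {H₀ H₁ : FinGraph} {k : ℕ}
    (h : (H₀.union H₁).KConnected k) (hw₀ : H₀.WellFormed) (hw₁ : H₁.WellFormed)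
    (hU : k ≤ (H₀.verts ∩ H₁.verts).card) :
    H₀.KConnectedTo k (H₀.verts ∩ H₁.verts) := by
  intro S hS x hx hxS
  obtain ⟨w, hwU, hwS⟩ := Finset.exists_mem_notMem_of_card_lt_card (hS.trans_le hU)
  set S' := S ∩ (H₀.union H₁).verts
  have hconn := h.2 S' Finset.inter_subset_right
    ((Finset.card_le_card Finset.inter_subset_left).trans_lt hS)
  have hmem : ∀ y ∈ H₀.verts, y ∉ S → y ∈ ((H₀.union H₁).deleteVerts S').verts :=
    fun y hy hyS => by simp [S', hy, hyS]
  have hwalk : ((H₀.union H₁).deleteVerts S').Reach x w :=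
    hconn.2 x (hmem x hx hxS) w (hmem w (Finset.mem_inter.1 hwU).1 hwS)
  -- Before the walk first meets `U` it uses only edges of `H₀`: an edge of `H₁` at a vertex
  -- of `H₀` starts in `U`.
  induction hwalk using Relation.ReflTransGen.head_induction_on with
  | refl => exact ⟨_, hwU, hwS, Reach.refl⟩
  | @head a b hab _ ih =>
    by_cases haU : a ∈ H₀.verts ∩ H₁.verts
    · exact ⟨a, haU, hxS, Reach.refl⟩
    obtain ⟨hab, -, hbS'⟩ := mk_mem_deleteVerts_edges.1 hab
    have hab₀ : s(a, b) ∈ H₀.edges := by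
      refine (mem_union_edges.1 hab).resolve_right fun hab₁ => haU ?_
      exact Finset.mem_inter.2 ⟨hx, hw₁.2 _ hab₁ a (Sym2.mem_mk_left a b)⟩
    have hb := hw₀.2 _ hab₀ b (Sym2.mem_mk_right a b)
    have hbS : b ∉ S := fun hbS => hbS' (by simp [S', hbS, hb])
    obtain ⟨w', hw'U, hw'S, hbw'⟩ := ih hb hbS
    exact ⟨w', hw'U, hw'S,
      (Reach.single (mk_mem_deleteVerts_edges.2 ⟨hab₀, hxS, hbS⟩)).trans hbw'⟩

end FinGraph

namespace Fin

variable {m : ℕ} [NeZero m]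

lemma eq_of_add_natCast_eq {b : Fin m} {q q' : ℕ} (hq : q < m) (hq' : q' < m)
    (h : b + (q : Fin m) = b + q') : q = q' := by
  simpa [Fin.val_natCast, Nat.mod_eq_of_lt hq, Nat.mod_eq_of_lt hq'] using
    congrArg Fin.val (add_left_cancel h)

lemma add_one_add_natCast_pred (b : Fin m) : b + 1 + ((m - 1 : ℕ) : Fin m) = b := by
  rw [Nat.cast_pred (NeZero.pos m)]
  simp

lemma exists_eq_add_natCast (b j : Fin m) : ∃ d < m, j = b + (d : Fin m) :=
  ⟨(j - b).val, (j - b).isLt, by simp⟩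

end Fin

lemma rimNext_eq_add_one {m : ℕ} [NeZero m] (i : Fin m) : rimNext i = i + 1 := by
  ext
  simp [rimNext, Fin.val_add]

abbrev FinGraph.rimCut {m : ℕ} [NeZero m] (G : FinGraph) (hub : ℕ) (u : Fin m → ℕ)
    (i : Fin m) (p : ℕ) : FinGraph :=
  (G.deleteEdge s(u i, u (i + 1))).deleteVerts {hub, u (i + 1 + p)}

namespace IsWheel

open FinGraph

variable {H₀ H₂ G : FinGraph} {hub m : ℕ} {u : Fin m → ℕ}

lemma three_le (hW : IsWheel H₂ hub m u) : 3 ≤ m := hW.1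

lemma rim_ne_hub (hW : IsWheel H₂ hub m u) (j : Fin m) : u j ≠ hub := hW.2.2.1 j

lemma injective (hW : IsWheel H₂ hub m u) : Function.Injective u := hW.2.1

lemma verts_eq (hW : IsWheel H₂ hub m u) :
    H₂.verts = insert hub (Finset.image u Finset.univ) := hW.2.2.2.1

lemma edges_eq (hW : IsWheel H₂ hub m u) :
    H₂.edges = Finset.image (fun i => s(hub, u i)) Finset.univ ∪
      Finset.image (fun i => s(u i, u (rimNext i))) Finset.univ := hW.2.2.2.2

lemma card_verts (hW : IsWheel H₂ hub m u) : H₂.verts.card = m + 1 := by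
  rw [hW.verts_eq, Finset.card_insert_of_notMem, Finset.card_image_of_injective _ hW.injective]
  · simp
  · simpa using fun j => hW.rim_ne_hub j

lemma spoke_mem (hW : IsWheel H₂ hub m u) (j : Fin m) : s(hub, u j) ∈ H₂.edges := by
  rw [hW.edges_eq]
  exact Finset.mem_union_left _ (Finset.mem_image_of_mem _ (Finset.mem_univ j))

lemma rim_mem [NeZero m] (hW : IsWheel H₂ hub m u) (i : Fin m) :
    s(u i, u (i + 1)) ∈ H₂.edges := by
  rw [hW.edges_eq, ← rimNext_eq_add_one]
  exact Finset.mem_union_right _ (Finset.mem_image_of_mem _ (Finset.mem_univ i))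

lemma eq_spoke_of_hub_mem (hW : IsWheel H₂ hub m u) {e : Sym2 ℕ} (he : e ∈ H₂.edges)
    (hhub : hub ∈ e) : ∃ j, e = s(hub, u j) := by
  rw [hW.edges_eq, Finset.mem_union] at he
  rcases he with he | he <;> obtain ⟨j, -, rfl⟩ := Finset.mem_image.1 he
  · exact ⟨j, rfl⟩
  · rcases Sym2.mem_iff.1 hhub with h | h
    exacts [(hW.rim_ne_hub _ h.symm).elim, (hW.rim_ne_hub _ h.symm).elim]

lemma spoke_ne_rim [NeZero m] (hW : IsWheel H₂ hub m u) (i j : Fin m) :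
    s(hub, u j) ≠ s(u i, u (i + 1)) := by
  intro h
  rcases Sym2.eq_iff.1 h with ⟨h, -⟩ | ⟨h, -⟩
  exacts [hW.rim_ne_hub _ h.symm, hW.rim_ne_hub _ h.symm]

-- The reversed reading `u i = u (j + 1)`, `u (i + 1) = u j` would need `m ∣ 2`.
lemma eq_of_rim_eq [NeZero m] (hW : IsWheel H₂ hub m u) {i j : Fin m}
    (h : s(u i, u (i + 1)) = s(u j, u (j + 1))) : i = j := by
  rcases Sym2.eq_iff.1 h with ⟨h, -⟩ | ⟨h₁, h₂⟩
  · exact hW.injective h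
  · have h₁ := hW.injective h₁
    have h₂ := hW.injective h₂
    subst h₁
    have h2 : ((2 : ℕ) : Fin m) = ((0 : ℕ) : Fin m) := by
      push_cast
      linear_combination h₂
    have := Fin.eq_of_add_natCast_eq (b := 0) (q := 2) (q' := 0)
      (by have := hW.three_le; omega) (NeZero.pos m) (by simpa using h2)
    omega

lemma rim_add_notMem_pair [NeZero m] (hW : IsWheel H₂ hub m u) (b : Fin m) {p q : ℕ}
    (hq : q < m) (hp : p < m) (hqp : q ≠ p) :
    u (b + q) ∉ ({hub, u (b + p)} : Finset ℕ) := by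
  simp only [Finset.mem_insert, Finset.mem_singleton, not_or]
  exact ⟨hW.rim_ne_hub _, fun h => hqp (Fin.eq_of_add_natCast_eq hq hp (hW.injective h))⟩

lemma rim_succ_notMem_pair [NeZero m] (hW : IsWheel H₂ hub m u) (i : Fin m) {p : ℕ}
    (hp : 1 ≤ p) (hpm : p < m) : u (i + 1) ∉ ({hub, u (i + 1 + p)} : Finset ℕ) := by
  simpa using hW.rim_add_notMem_pair (i + 1) (NeZero.pos m) hpm (by omega : 0 ≠ p)

lemma rim_notMem_pair [NeZero m] (hW : IsWheel H₂ hub m u) (i : Fin m) {p : ℕ}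
    (hp : p + 2 ≤ m) : u i ∉ ({hub, u (i + 1 + p)} : Finset ℕ) := by
  simpa [Fin.add_one_add_natCast_pred] using
    hW.rim_add_notMem_pair (i + 1) (q := m - 1) (by omega) (by omega) (by omega)

lemma reach_arc [NeZero m] (hW : IsWheel H₂ hub m u) (hG : H₂.edges ⊆ G.edges) (i : Fin m)
    {S : Finset ℕ} {a c : ℕ} (hac : a ≤ c) (hc : c < m)
    (hS : ∀ q, a ≤ q → q ≤ c → u (i + 1 + q) ∉ S) :
    ((G.deleteEdge s(u i, u (i + 1))).deleteVerts S).Reach (u (i + 1 + a)) (u (i + 1 + c)) := by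
  induction c, hac using Nat.le_induction with
  | base => exact Reach.refl
  | succ c hac ih =>
    refine (ih (by omega) fun q h₁ h₂ => hS q h₁ (by omega)).tail ?_
    have hsucc : i + 1 + ((c + 1 : ℕ) : Fin m) = i + 1 + c + 1 := by push_cast; ring
    refine mk_mem_deleteVerts_edges.2 ⟨mem_deleteEdge_edges.2 ⟨fun h => ?_, ?_⟩,
      hS c hac (by omega), hS (c + 1) (by omega) le_rfl⟩
    · rw [hsucc] at h
      have h := hW.eq_of_rim_eq h
      conv_rhs at h => rw [← Fin.add_one_add_natCast_pred i]
      have := Fin.eq_of_add_natCast_eq (by omega) (by omega) h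
      omega
    · rw [hsucc]
      exact hG (hW.rim_mem _)

lemma offset_lt_of_reach_add_one [NeZero m] (hW : IsWheel H₂ hub m u)
    (hG : H₂.edges ⊆ G.edges) (i : Fin m) {p d : ℕ} (hp : 1 ≤ p) (hpm : p < m) (hd : d < m)
    (hsep : ¬ (G.rimCut hub u i p).Reach (u i) (u (i + 1)))
    (h : (G.rimCut hub u i p).Reach (u (i + 1)) (u (i + 1 + d))) : d < p := by
  have hdp : d ≠ p := by
    rintro rfl
    exact h.notMem_of_deleteVerts (hW.rim_succ_notMem_pair i hp hpm) (by simp)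
  by_contra! hpd
  have harc := hW.reach_arc hG i (a := d) (c := m - 1) (by omega) (by omega)
    fun q h₁ h₂ => hW.rim_add_notMem_pair _ (by omega) hpm (by omega)
  rw [Fin.add_one_add_natCast_pred] at harc
  exact hsep (h.trans harc).symm

lemma lt_offset_of_reach [NeZero m] (hW : IsWheel H₂ hub m u) (hG : H₂.edges ⊆ G.edges)
    (i : Fin m) {p d : ℕ} (hp : p + 2 ≤ m) (hd : d < m)
    (hsep : ¬ (G.rimCut hub u i p).Reach (u i) (u (i + 1)))
    (h : (G.rimCut hub u i p).Reach (u i) (u (i + 1 + d))) : p < d := by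
  have hdp : d ≠ p := by
    rintro rfl
    exact h.notMem_of_deleteVerts (hW.rim_notMem_pair i hp) (by simp)
  by_contra! hpd
  have harc := hW.reach_arc hG i (a := 0) (c := d) (by omega) hd
    fun q h₁ h₂ => hW.rim_add_notMem_pair (p := p) _ (by omega) (by omega) (by omega)
  simp only [Nat.cast_zero, add_zero] at harc
  exact hsep (h.trans harc.symm)

lemma eq_spoke_of_hub_mem_union (hW : IsWheel H₂ hub m u) (hw₀ : H₀.WellFormed)
    (hV : H₀.verts ∩ H₂.verts = Finset.image u Finset.univ) {e : Sym2 ℕ}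
    (he : e ∈ (H₀.union H₂).edges) (hhub : hub ∈ e) : ∃ j, e = s(hub, u j) := by
  rcases mem_union_edges.1 he with he | he
  · have h : hub ∈ H₀.verts ∩ H₂.verts :=
      Finset.mem_inter.2 ⟨hw₀.2 e he hub hhub, hW.verts_eq ▸ Finset.mem_insert_self _ _⟩
    rw [hV] at h
    obtain ⟨j, -, hj⟩ := Finset.mem_image.1 h
    exact (hW.rim_ne_hub j hj).elim
  · exact hW.eq_spoke_of_hub_mem he hhub

lemma connected_of_reach_rim (hW : IsWheel H₂ hub m u)
    (hH₀ : H₀.KConnectedTo 3 (Finset.image u Finset.univ)) {e : Sym2 ℕ}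
    (he : e ∉ H₀.edges) (hspoke : ∀ j, s(hub, u j) ≠ e) {S : Finset ℕ} (hS : S.card < 3)
    {τ : ℕ} (hτ : τ ∈ (H₀.union H₂).verts) (hτS : τ ∉ S)
    (hrim : ∀ j, u j ∉ S → (((H₀.union H₂).deleteEdge e).deleteVerts S).Reach (u j) τ) :
    (((H₀.union H₂).deleteEdge e).deleteVerts S).Connected := by
  refine Connected.of_reach (Finset.mem_sdiff.2 ⟨hτ, hτS⟩) fun a ha => ?_
  obtain ⟨ha, haS⟩ : a ∈ H₀.verts ∪ H₂.verts ∧ a ∉ S := by simpa using ha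
  rcases Finset.mem_union.1 ha with ha | ha
  · obtain ⟨w, hw, hwS, haw⟩ := hH₀ S hS a ha haS
    obtain ⟨j, -, rfl⟩ := Finset.mem_image.1 hw
    refine (haw.mono fun f hf => ?_).trans (hrim j hwS)
    simp only [deleteVerts, Finset.mem_filter, mem_deleteEdge_edges, mem_union_edges] at hf ⊢
    exact ⟨⟨fun h => he (h ▸ hf.1), Or.inl hf.1⟩, hf.2⟩
  rcases Finset.mem_insert.1 (hW.verts_eq ▸ ha) with rfl | ha
  · obtain ⟨w, hw, hwS⟩ := Finset.exists_mem_notMem_of_card_lt_card (s := S)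
      (t := Finset.image u .univ)
      (by rw [Finset.card_image_of_injective _ hW.injective]; simpa using hS.trans_le hW.three_le)
    obtain ⟨j, -, rfl⟩ := Finset.mem_image.1 hw
    refine (Reach.single (mk_mem_deleteVerts_edges.2 ⟨?_, haS, hwS⟩)).trans (hrim j hwS)
    exact mem_deleteEdge_edges.2 ⟨hspoke j, mem_union_edges.2 (Or.inr (hW.spoke_mem j))⟩
  · obtain ⟨j, -, rfl⟩ := Finset.mem_image.1 ha
    exact hrim j haS

lemma connected_of_hub_notMem (hW : IsWheel H₂ hub m u)
    (hH₀ : H₀.KConnectedTo 3 (Finset.image u Finset.univ)) {e : Sym2 ℕ}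
    (he : e ∉ H₀.edges) (hspoke : ∀ j, s(hub, u j) ≠ e) {S : Finset ℕ} (hS : S.card < 3)
    (hhub : hub ∉ S) :
    (((H₀.union H₂).deleteEdge e).deleteVerts S).Connected := by
  refine connected_of_reach_rim hW hH₀ he hspoke hS (by simp [hW.verts_eq]) hhub fun j hj => ?_
  refine (Reach.single (mk_mem_deleteVerts_edges.2 ⟨?_, hhub, hj⟩)).symm
  exact mem_deleteEdge_edges.2 ⟨hspoke j, mem_union_edges.2 (Or.inr (hW.spoke_mem j))⟩

lemma connected_of_hub_mem [NeZero m] (hW : IsWheel H₂ hub m u)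
    (hH₀ : H₀.KConnectedTo 3 (Finset.image u Finset.univ)) (i : Fin m)
    (he : s(u i, u (i + 1)) ∉ H₀.edges)
    (hR : ∀ p, 1 ≤ p → p + 2 ≤ m →
      ((H₀.union H₂).rimCut hub u i p).Reach (u i) (u (i + 1)))
    {S : Finset ℕ} (hS : S.card < 3) (hhub : hub ∈ S) :
    (((H₀.union H₂).deleteEdge s(u i, u (i + 1))).deleteVerts S).Connected := by
  have hm := hW.three_le
  have hG : H₂.edges ⊆ (H₀.union H₂).edges := edges_subset_union_right
  have hSeq : ∀ q : ℕ, u (i + 1 + q) ∈ S → S = {hub, u (i + 1 + q)} := fun q hq =>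
    (Finset.eq_of_subset_of_card_le (Finset.insert_subset hhub (Finset.singleton_subset_iff.2 hq))
      (by rw [Finset.card_pair (hW.rim_ne_hub _).symm]; omega)).symm
  -- Every rim vertex outside `S` reaches `u (i + 1)` or `u i` along the rim path
  -- `u (i + 1), …, u i`, which meets `S` at most once.
  refine hW.connected_of_reach_rim hH₀ he (hW.spoke_ne_rim i) hS
    (τ := if u (i + 1) ∈ S then u i else u (i + 1)) (by split_ifs <;> simp [hW.verts_eq]) ?_ ?_
  · split_ifs with h₁
    · exact hSeq 0 (by simpa using h₁) ▸ hW.rim_notMem_pair i (p := 0) (by omega)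
    · exact h₁
  intro j hj
  obtain ⟨d, hd, rfl⟩ := Fin.exists_eq_add_natCast (i + 1) j
  by_cases hclean : ∀ q ≤ d, u (i + 1 + q) ∉ S
  · have harc := hW.reach_arc hG i (a := 0) (c := d) (Nat.zero_le d) hd
      fun q _ hq => hclean q hq
    simp only [Nat.cast_zero, add_zero] at harc
    rw [if_neg (by simpa using hclean 0 (Nat.zero_le d))]
    exact harc.symm
  obtain ⟨q, hqd, hq⟩ : ∃ q ≤ d, u (i + 1 + q) ∈ S := by simpa using hclean
  have hqd : q < d := lt_of_le_of_ne hqd (by rintro rfl; exact hj hq)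
  obtain rfl := hSeq q hq
  have harc := hW.reach_arc hG i (a := d) (c := m - 1) (by omega)
    (by omega) fun q' _ _ => hW.rim_add_notMem_pair (i + 1) (p := q) (by omega) (by omega)
      (by omega)
  rw [Fin.add_one_add_natCast_pred] at harc
  refine harc.trans ?_
  split_ifs with h₁
  · exact Reach.refl
  · have hq0 : q ≠ 0 := by rintro rfl; exact h₁ (by simp)
    exact hR q (by omega) (by omega)

theorem exists_separation_of_not_kConnected [NeZero m] (hW : IsWheel H₂ hub m u)
    (hH₀ : H₀.KConnectedTo 3 (Finset.image u Finset.univ)) (i : Fin m)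
    (he : s(u i, u (i + 1)) ∉ H₀.edges)
    (h : ¬ ((H₀.union H₂).deleteEdge s(u i, u (i + 1))).KConnected 3) :
    ∃ p, 1 ≤ p ∧ p + 2 ≤ m ∧
      ¬ ((H₀.union H₂).rimCut hub u i p).Reach (u i) (u (i + 1)) := by
  by_contra! hR
  refine h ⟨?_, fun S _ hS => ?_⟩
  · calc 3 + 1 ≤ H₂.verts.card := by rw [hW.card_verts]; have := hW.three_le; omega
      _ ≤ (H₀.verts ∪ H₂.verts).card := Finset.card_le_card Finset.subset_union_right
  by_cases hhub : hub ∈ S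
  · exact hW.connected_of_hub_mem hH₀ i he hR hS hhub
  · exact hW.connected_of_hub_notMem hH₀ he (hW.spoke_ne_rim i) hS hhub

lemma eq_of_reach_of_reach [NeZero m] (hW : IsWheel H₂ hub m u) (hG : H₂.edges ⊆ G.edges)
    (i : Fin m) {l p : ℕ} (hl : 1 ≤ l) (hlp : l ≤ p) (hp : p + 2 ≤ m)
    (hB : ¬ (G.rimCut hub u i l).Reach (u i) (u (i + 1)))
    (hC : ¬ (G.rimCut hub u (i + 1) p).Reach (u (i + 1)) (u (i + 1 + 1)))
    {j : Fin m}
    (hjB : (G.rimCut hub u i l).Reach (u (i + 1)) (u j))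
    (hjC : (G.rimCut hub u (i + 1) p).Reach (u (i + 1)) (u j)) :
    j = i + 1 := by
  obtain ⟨d, hd, rfl⟩ := Fin.exists_eq_add_natCast (i + 1) j
  have hdl := hW.offset_lt_of_reach_add_one hG i hl (by omega) hd hB hjB
  rcases d with _ | d
  · simp
  · rw [show i + 1 + ((d + 1 : ℕ) : Fin m) = i + 1 + 1 + d by push_cast; ring] at hjC
    have := hW.lt_offset_of_reach hG (i + 1) hp (by omega) hC hjC
    omega

lemma reach_of_reach_of_edge [NeZero m] (hW : IsWheel H₂ hub m u) (hG : H₂.edges ⊆ G.edges)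
    (i : Fin m) {l p : ℕ} (hl : 1 ≤ l) (hlp : l ≤ p) (hp : p + 2 ≤ m)
    (hB : ¬ (G.rimCut hub u i l).Reach (u i) (u (i + 1)))
    (hC : ¬ (G.rimCut hub u (i + 1) p).Reach (u (i + 1)) (u (i + 1 + 1)))
    {a b : ℕ}
    (haB : (G.rimCut hub u i l).Reach (u (i + 1)) a)
    (haC : (G.rimCut hub u (i + 1) p).Reach (u (i + 1)) a)
    (hab : s(a, b) ∈ G.edges) (hne : s(a, b) ≠ s(u i, u (i + 1)))
    (hne' : s(a, b) ≠ s(u (i + 1), u (i + 1 + 1))) (hb : b ≠ hub) :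
    (G.rimCut hub u i l).Reach (u (i + 1)) b ∧
      (G.rimCut hub u (i + 1) p).Reach (u (i + 1)) b := by
  have haB' := haB.notMem_of_deleteVerts (hW.rim_succ_notMem_pair i hl (by omega))
  have haC' := haC.notMem_of_deleteVerts (hW.rim_notMem_pair (i + 1) hp)
  have hbB : b ∉ ({hub, u (i + 1 + l)} : Finset ℕ) → _ := fun hbS =>
    haB.tail (mk_mem_deleteVerts_edges.2 ⟨mem_deleteEdge_edges.2 ⟨hne, hab⟩, haB', hbS⟩)
  have hbC : b ∉ ({hub, u (i + 1 + 1 + p)} : Finset ℕ) → _ := fun hbS =>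
    haC.tail (mk_mem_deleteVerts_edges.2 ⟨mem_deleteEdge_edges.2 ⟨hne', hab⟩, haC', hbS⟩)
  have hbl : b ≠ u (i + 1 + l) := by
    rintro rfl
    rw [show i + 1 + (l : Fin m) = i + 1 + 1 + ((l - 1 : ℕ) : Fin m) by
      rw [Nat.cast_sub hl]; ring] at hbC
    have := hW.lt_offset_of_reach hG (i + 1) hp (by omega) hC
      (hbC (hW.rim_add_notMem_pair _ (by omega) (by omega) (by omega)))
    omega
  have hbp : b ≠ u (i + 1 + 1 + p) := by
    rintro rfl
    rw [show i + 1 + 1 + (p : Fin m) = i + 1 + ((p + 1 : ℕ) : Fin m) by push_cast; ring] at hbB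
    have := hW.offset_lt_of_reach_add_one hG i hl (by omega) (by omega) hB
      (hbB (hW.rim_add_notMem_pair _ (by omega) (by omega) (by omega)))
    omega
  exact ⟨hbB (by simp [hb, hbl]), hbC (by simp [hb, hbp])⟩

theorem false_of_consecutive_separations [NeZero m] (hW : IsWheel H₂ hub m u)
    (hG : H₂.edges ⊆ G.edges) (hwf : G.WellFormed)
    (hhub : ∀ e ∈ G.edges, hub ∈ e → ∃ j, e = s(hub, u j))
    (i : Fin m) {l p : ℕ} (hl : 1 ≤ l) (hlp : l ≤ p) (hp : p + 2 ≤ m)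
    (hB : ¬ (G.rimCut hub u i l).Reach (u i) (u (i + 1)))
    (hC : ¬ (G.rimCut hub u (i + 1) p).Reach (u (i + 1)) (u (i + 1 + 1)))
    (hconn : ((G.deleteEdge s(u i, u (i + 1))).deleteVerts {u (i + 1)}).Connected)
    (hdeg : 4 ≤ G.degree (u (i + 1))) : False := by
  have hrimX := fun {j} => hW.eq_of_reach_of_reach hG i hl hlp hp hB hC (j := j)
  have hstep := fun {a b} => hW.reach_of_reach_of_edge hG i hl hlp hp hB hC (a := a) (b := b)
  have hxB := hW.rim_succ_notMem_pair i hl (by omega)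
  set x := u (i + 1)
  set B := G.rimCut hub u i l
  set C := G.rimCut hub u (i + 1) p
  obtain ⟨y, hxy, hy⟩ := exists_mk_mem_edges_notMem_of_card_lt_degree (x := x)
    (E := {s(hub, x), s(u i, x), s(x, u (i + 1 + 1))}) (Finset.card_le_three.trans_lt hdeg)
  simp only [Finset.mem_insert, Finset.mem_singleton, not_or] at hy
  have hyX := hstep Reach.refl Reach.refl hxy hy.2.1 hy.2.2 (by rintro rfl; exact hy.1 Sym2.eq_swap)
  have hyx : y ≠ x := by
    rintro rfl
    exact hwf.1 _ hxy (Sym2.mk_isDiag_iff.2 rfl)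
  -- The vertices other than `x` on its side of both separations form a union of components
  -- of `G - s(u i, x) - x`; it contains `y` but not the hub.
  have hclosed : ∀ a b, s(a, b) ∈ ((G.deleteEdge s(u i, x)).deleteVerts {x}).edges →
      (B.Reach x a ∧ C.Reach x a) ∧ a ≠ x → (B.Reach x b ∧ C.Reach x b) ∧ b ≠ x := by
    rintro a b hab ⟨⟨haB, haC⟩, hax⟩
    obtain ⟨hab, -, hbx⟩ := mk_mem_deleteVerts_edges.1 hab
    obtain ⟨hne, hab⟩ := mem_deleteEdge_edges.1 hab
    have ha : ∀ j, a ≠ u j := by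
      rintro j rfl
      exact hax (congrArg u (hrimX haB haC))
    refine ⟨hstep haB haC hab hne (fun h => ?_) ?_, by simpa using hbx⟩
    · rcases Sym2.mem_iff.1 (h ▸ Sym2.mem_mk_left a b) with h | h
      exacts [ha _ h, ha _ h]
    · rintro rfl
      obtain ⟨j, hj⟩ := hhub _ hab (Sym2.mem_mk_right _ _)
      rcases Sym2.eq_iff.1 hj with ⟨-, h⟩ | ⟨h, -⟩
      exacts [hW.rim_ne_hub j h.symm, ha j h]
  have hverts :
      ∀ v ∈ G.verts, v ≠ x → v ∈ ((G.deleteEdge s(u i, x)).deleteVerts {x}).verts :=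
    fun v hv hvx => Finset.mem_sdiff.2 ⟨hv, by simpa using hvx⟩
  have hhubX := Reach.of_forall_edge hclosed
    (hconn.2 y (hverts y (hwf.2 _ hxy y (Sym2.mem_mk_right _ _)) hyx) hub
      (hverts hub (hwf.2 _ (hG (hW.spoke_mem i)) hub (Sym2.mem_mk_left _ _))
        (hW.rim_ne_hub _).symm)) ⟨hyX, hyx⟩
  exact hhubX.1.1.notMem_of_deleteVerts hxB (by simp)

end IsWheel

theorem statement14_general (H₀ H₁ H₂ : FinGraph)
    (hw0 : H₀.WellFormed) (hw1 : H₁.WellFormed) (hw2 : H₂.WellFormed)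
    (U : Finset ℕ) (hU : 3 ≤ U.card)
    (hV01 : H₀.verts ∩ H₁.verts = U)
    (hub m : ℕ) (u : Fin m → ℕ)
    (hwheel : IsWheel H₂ hub m u) (hrim : Finset.image u Finset.univ = U)
    (hV02 : H₀.verts ∩ H₂.verts = U) (hE02 : H₀.edges ∩ H₂.edges = ∅)
    (h3conn : FinGraph.KConnected 3 (H₀.union H₁))
    (hdeg : ∀ w ∈ U, 4 ≤ (H₀.union H₂).degree w) :
    ∃ i : Fin m,
      FinGraph.KConnected 3 ((H₀.union H₂).deleteEdge s(u i, u (rimNext i))) := by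
  have : NeZero m := ⟨by have := hwheel.three_le; omega⟩
  subst hrim
  have hH₀ : H₀.KConnectedTo 3 (Finset.image u Finset.univ) :=
    hV01 ▸ h3conn.kConnectedTo_inter hw0 hw1 (hV01 ▸ hU)
  have hrim₀ : ∀ i, s(u i, u (i + 1)) ∉ H₀.edges := fun i =>
    Finset.disjoint_right.1 (Finset.disjoint_iff_inter_eq_empty.2 hE02) (hwheel.rim_mem i)
  simp only [rimNext_eq_add_one]
  by_contra! hfail
  choose p hp₁ hp₂ hsep using
    fun i => hwheel.exists_separation_of_not_kConnected hH₀ i (hrim₀ i) (hfail i)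
  obtain ⟨i, -, hmin⟩ := Finset.univ.exists_min_image p Finset.univ_nonempty
  exact hwheel.false_of_consecutive_separations FinGraph.edges_subset_union_right
    (hw0.union hw2)
    (fun e he => hwheel.eq_spoke_of_hub_mem_union hw0 hV02 he) i (hp₁ i)
    (hmin (i + 1) (Finset.mem_univ _)) (hp₂ (i + 1)) (hsep i) (hsep (i + 1))
    (hwheel.connected_of_hub_notMem hH₀ (hrim₀ i) (hwheel.spoke_ne_rim i) (by simp)
      (by simpa using (hwheel.rim_ne_hub _).symm))
    (hdeg _ (Finset.mem_image_of_mem u (Finset.mem_univ _)))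

/-- Lemma: replacing a subgraph by a wheel on the attachment vertices preserves
3-connectivity after deleting a suitable rim edge. -/
theorem statement14 (H₀ H₁ H₂ : FinGraph)
    (hw0 : H₀.WellFormed) (hw1 : H₁.WellFormed) (hw2 : H₂.WellFormed)
    (U : Finset ℕ) (hU : 3 ≤ U.card)
    (hV01 : H₀.verts ∩ H₁.verts = U) (hE01 : H₀.edges ∩ H₁.edges = ∅)
    (hub m : ℕ) (u : Fin m → ℕ)
    (hwheel : IsWheel H₂ hub m u) (hrim : Finset.image u Finset.univ = U)
    (hV02 : H₀.verts ∩ H₂.verts = U) (hE02 : H₀.edges ∩ H₂.edges = ∅)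
    (h3conn : FinGraph.KConnected 3 (H₀.union H₁))
    (hdeg : ∀ w ∈ U, 4 ≤ (H₀.union H₂).degree w) :
    ∃ i : Fin m,
      FinGraph.KConnected 3 ((H₀.union H₂).deleteEdge s(u i, u (rimNext i))) :=
  statement14_general H₀ H₁ H₂ hw0 hw1 hw2 U hU hV01 hub m u hwheel hrim hV02 hE02 h3conn hdeg
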